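/- arXiv:1712.04846 — 4 statements merged into one kernel-verified Lean document; each statement's English description precedes it below -/
import Mathlib

section
/- Let n ≥ 2, let I ⊆ ℝ be an interval, and let ω: GL⁺(n) → I be twice continuously (Fréchet) differentiable. Suppose there exist F ∈ GL⁺(n) and vectors ξ, η ∈ ℝⁿ \ {0} such that Dω(F).(ξ⊗η) = 0 and D²ω(F).(ξ⊗η, ξ⊗η) < 0. Then there exists no strictly increasing function Ψ: I → ℝ such that the mapping F ↦ Ψ(ω(F)) is rank-one convex on GL⁺(n). -/
open Matrix Real

attribute [local instance] Matrix.frobeniusNormedAddCommGroup Matrix.frobeniusNormedSpace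

noncomputable section

/-- The space of real `n × n` matrices. -/
abbrev Mat (n : ℕ) := Matrix (Fin n) (Fin n) ℝ

/-- `GL⁺(n)`: real `n × n` matrices with positive determinant. -/
def GLp (n : ℕ) : Set (Mat n) := {F | 0 < F.det}

/-- Frobenius inner product `⟨X, Y⟩ = tr (X Yᵀ)`. -/
def inn {n : ℕ} (X Y : Mat n) : ℝ := (X * Yᵀ).trace

/-- Squared Frobenius norm `‖X‖² = tr (Xᵀ X)`. -/
def nsq {n : ℕ} (X : Mat n) : ℝ := (Xᵀ * X).trace

/-- The primary matrix function associated to `f : ℝ → ℝ`: applies `f` to the eigenvalues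
in a spectral decomposition of a Hermitian (i.e. real symmetric) matrix, junk value `0`
otherwise. -/
def matFun {n : ℕ} (f : ℝ → ℝ) (A : Mat n) : Mat n :=
  if hA : A.IsHermitian then
    (hA.eigenvectorUnitary : Mat n) * Matrix.diagonal (f ∘ hA.eigenvalues) *
      (star (hA.eigenvectorUnitary : Mat n))
  else 0

/-- Principal square root of a symmetric positive semidefinite matrix. -/
def matSqrt {n : ℕ} (A : Mat n) : Mat n := matFun Real.sqrt A

/-- Principal matrix logarithm of a symmetric positive definite matrix. -/
def matLog {n : ℕ} (A : Mat n) : Mat n := matFun Real.log A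

/-- `log U` where `U = √(FᵀF)` is the right stretch tensor of `F`. -/
def logU {n : ℕ} (F : Mat n) : Mat n := matLog (matSqrt (Fᵀ * F))

/-- `log V` where `V = √(FFᵀ)` is the left stretch tensor of `F`. -/
def logV {n : ℕ} (F : Mat n) : Mat n := matLog (matSqrt (F * Fᵀ))

/-- Deviatoric (trace-free) part `dev_n X = X - (tr X / n) 𝟙`. -/
def dev {n : ℕ} (X : Mat n) : Mat n := X - (X.trace / n) • (1 : Mat n)

/-- Rank-one convexity of `W : GL⁺(n) → ℝ`: along every rank-one line segment contained in
`GL⁺(n)`, the function is convex. -/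
def RankOneConvex {n : ℕ} (W : Mat n → ℝ) : Prop :=
  ∀ F ∈ GLp n, ∀ ξ η : Fin n → ℝ, ∀ I : Set ℝ, Convex ℝ I →
    (∀ t ∈ I, 0 < (F + t • vecMulVec ξ η).det) →
    ConvexOn ℝ I (fun t => W (F + t • vecMulVec ξ η))

end

/-! A rank-one line through `F` along which `ω` has a critical point with negative second
derivative gives a strict local maximum of `t ↦ ω (F + t • ξ ⊗ η)` at `0`. Composing with a
strictly increasing `Ψ` keeps it a strict local maximum, so the values at `± ε` both lie below the
value at the midpoint `0`, which no convex function allows. -/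

open Filter Topology Set

theorem isOpen_GLp (n : ℕ) : IsOpen (GLp n) :=
  isOpen_Ioi.preimage (continuous_id.matrix_det)

section StrictLocalMax

variable {f : ℝ → ℝ} {x₀ : ℝ}

theorem eventually_nhdsLT_lt_of_deriv_pos (hc : ContinuousAt f x₀)
    (hf : ∀ᶠ x in 𝓝[<] x₀, 0 < deriv f x) : ∀ᶠ x in 𝓝[<] x₀, f x < f x₀ := by
  obtain ⟨a, ha : a < x₀, hsub⟩ := mem_nhdsLT_iff_exists_Ioo_subset.mp hf
  have hdiff : DifferentiableOn ℝ f (Ioo a x₀) := fun x hx =>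
    (differentiableAt_of_deriv_ne_zero (hsub hx).ne').differentiableWithinAt
  have hcont : ContinuousOn f (Ioc a x₀) :=
    Ioo_union_right ha ▸ hdiff.continuousOn.union_continuousAt isOpen_Ioo (by simpa using hc)
  have hmono : StrictMonoOn f (Ioc a x₀) :=
    strictMonoOn_of_deriv_pos (convex_Ioc a x₀) hcont (by rwa [interior_Ioc])
  filter_upwards [Ioo_mem_nhdsLT ha] with x hx
  exact hmono (Ioo_subset_Ioc_self hx) (right_mem_Ioc.mpr ha) hx.2

theorem eventually_nhdsGT_lt_of_deriv_neg (hc : ContinuousAt f x₀)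
    (hf : ∀ᶠ x in 𝓝[>] x₀, deriv f x < 0) : ∀ᶠ x in 𝓝[>] x₀, f x < f x₀ := by
  obtain ⟨b, hb : x₀ < b, hsub⟩ := mem_nhdsGT_iff_exists_Ioo_subset.mp hf
  have hdiff : DifferentiableOn ℝ f (Ioo x₀ b) := fun x hx =>
    (differentiableAt_of_deriv_ne_zero (hsub hx).ne).differentiableWithinAt
  have hcont : ContinuousOn f (Ico x₀ b) :=
    Ioo_union_left hb ▸ hdiff.continuousOn.union_continuousAt isOpen_Ioo (by simpa using hc)
  have hanti : StrictAntiOn f (Ico x₀ b) :=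
    strictAntiOn_of_deriv_neg (convex_Ico x₀ b) hcont (by rwa [interior_Ico])
  filter_upwards [Ioo_mem_nhdsGT hb] with x hx
  exact hanti (left_mem_Ico.mpr hb) (Ioo_subset_Ico_self hx) hx.1

theorem eventually_lt_of_deriv_deriv_neg (hf : deriv (deriv f) x₀ < 0) (hd : deriv f x₀ = 0)
    (hc : ContinuousAt f x₀) : ∀ᶠ x in 𝓝[≠] x₀, f x < f x₀ := by
  have hsign : ∀ᶠ x in 𝓝[≠] x₀, SignType.sign (deriv f x) = SignType.sign (x₀ - x) :=
    nhdsWithin_le_nhds (eventually_nhdsWithin_sign_eq_of_deriv_neg hf hd)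
  rw [← nhdsLT_sup_nhdsGT, eventually_sup]
  exact ⟨eventually_nhdsLT_lt_of_deriv_pos hc (deriv_pos_left_of_sign_deriv hsign),
    eventually_nhdsGT_lt_of_deriv_neg hc (deriv_neg_right_of_sign_deriv hsign)⟩

end StrictLocalMax

section Line

variable {E : Type*} [NormedAddCommGroup E] [NormedSpace ℝ E] {f : E → ℝ} {x v : E}

theorem tendsto_add_smul_nhds_zero (x v : E) : Tendsto (fun t : ℝ => x + t • v) (𝓝 0) (𝓝 x) := by
  simpa using (continuous_const.add (continuous_id.smul continuous_const)).tendsto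
    (0 : ℝ) (f := fun t : ℝ => x + t • v)

theorem deriv_comp_add_smul {t : ℝ} (hf : DifferentiableAt ℝ f (x + t • v)) :
    deriv (fun s : ℝ => f (x + s • v)) t = fderiv ℝ f (x + t • v) v := by
  have hline : HasDerivAt (fun s : ℝ => x + s • v) v t := by
    simpa using ((hasDerivAt_id t).smul_const v).const_add x
  exact (hf.hasFDerivAt.comp_hasDerivAt t hline).deriv

theorem deriv_deriv_comp_add_smul (hf : ContDiffAt ℝ 2 f x) :
    deriv (deriv fun t : ℝ => f (x + t • v)) 0 = fderiv ℝ (fun y => fderiv ℝ f y v) x v := by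
  have hdiff : ∀ᶠ t in 𝓝 (0 : ℝ), DifferentiableAt ℝ f (x + t • v) :=
    (tendsto_add_smul_nhds_zero x v).eventually
      ((hf.eventually (by simp)).mono fun y hy => hy.differentiableAt two_ne_zero)
  have hderiv : deriv (fun t : ℝ => f (x + t • v)) =ᶠ[𝓝 0] fun t => fderiv ℝ f (x + t • v) v :=
    hdiff.mono fun t ht => deriv_comp_add_smul ht
  have hD : DifferentiableAt ℝ (fun y => fderiv ℝ f y v) x :=
    ((hf.fderiv_right (m := 1) (by norm_num)).differentiableAt one_ne_zero).clm_apply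
      (differentiableAt_const v)
  rw [hderiv.deriv_eq]
  simpa using deriv_comp_add_smul (t := 0) (v := v) (by simpa using hD)

end Line

theorem impossibility_lemma_general
    (n : ℕ) (I : Set ℝ)
    (ω : Mat n → ℝ) (hω : ContDiffOn ℝ 2 ω (GLp n))
    (hmaps : ∀ F ∈ GLp n, ω F ∈ I)
    (F : Mat n) (hF : F ∈ GLp n)
    (ξ η : Fin n → ℝ)
    (h1 : fderiv ℝ ω F (vecMulVec ξ η) = 0)
    (h2 : fderiv ℝ (fun X => fderiv ℝ ω X (vecMulVec ξ η)) F (vecMulVec ξ η) < 0) :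
    ¬ ∃ Ψ : ℝ → ℝ, StrictMonoOn Ψ I ∧ RankOneConvex (fun X => Ψ (ω X)) := by
  rintro ⟨Ψ, hΨ, hroc⟩
  set M := vecMulVec ξ η
  set g : ℝ → ℝ := fun t => ω (F + t • M)
  have hωF : ContDiffAt ℝ 2 ω F := hω.contDiffAt ((isOpen_GLp n).mem_nhds hF)
  have hmax : ∀ᶠ t in 𝓝[≠] 0, g t < g 0 := by
    refine eventually_lt_of_deriv_deriv_neg ?_ ?_ ?_
    · rwa [deriv_deriv_comp_add_smul hωF]
    · rwa [deriv_comp_add_smul (by simpa using hωF.differentiableAt two_ne_zero), zero_smul,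
        add_zero]
    · exact hωF.continuousAt.comp_of_eq (by fun_prop) (by simp)
  obtain ⟨ε, hε, hball⟩ := Metric.nhds_basis_closedBall.eventually_iff.mp
    ((eventually_nhdsWithin_iff.mp hmax).and
      ((tendsto_add_smul_nhds_zero F M).eventually ((isOpen_GLp n).mem_nhds hF)))
  have hconv : ConvexOn ℝ (Metric.closedBall 0 ε) (fun t => Ψ (g t)) :=
    hroc F hF ξ η _ (convex_closedBall 0 ε) fun t ht => (hball ht).2
  have hlt : ∀ t ∈ Metric.closedBall (0 : ℝ) ε, t ≠ 0 → Ψ (g t) < Ψ (g 0) := fun t ht ht0 =>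
    hΨ (hmaps _ (hball ht).2) (hmaps _ (hball (Metric.mem_closedBall_self hε.le)).2)
      ((hball ht).1 ht0)
  have hneg : -ε ∈ Metric.closedBall (0 : ℝ) ε := by simp [abs_of_pos hε]
  have hpos : ε ∈ Metric.closedBall (0 : ℝ) ε := by simp [abs_of_pos hε]
  have hmid : (0 : ℝ) ∈ segment ℝ (-ε) ε := by
    rw [segment_eq_Icc (by linarith)]
    exact ⟨by linarith, hε.le⟩
  exact (hconv.le_on_segment hneg hpos hmid).not_gt
    (max_lt (hlt _ hneg (by linarith)) (hlt _ hpos hε.ne'))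

/-- **Lemma 2.1 (impossibility lemma).** Let `n ≥ 2`, let `I ⊆ ℝ` be an interval and let
`ω : GL⁺(n) → I` be twice continuously differentiable. If there exist `F ∈ GL⁺(n)` and nonzero
vectors `ξ, η ∈ ℝⁿ` with `Dω(F).(ξ⊗η) = 0` and `D²ω(F).(ξ⊗η, ξ⊗η) < 0`, then there is no
strictly increasing function `Ψ : I → ℝ` such that `F ↦ Ψ(ω(F))` is rank-one convex on `GL⁺(n)`. -/
theorem impossibility_lemma
    (n : ℕ) (hn : 2 ≤ n) (I : Set ℝ) (hI : Convex ℝ I)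
    (ω : Mat n → ℝ) (hω : ContDiffOn ℝ 2 ω (GLp n))
    (hmaps : ∀ F ∈ GLp n, ω F ∈ I)
    (F : Mat n) (hF : F ∈ GLp n)
    (ξ η : Fin n → ℝ) (hξ : ξ ≠ 0) (hη : η ≠ 0)
    (h1 : fderiv ℝ ω F (vecMulVec ξ η) = 0)
    (h2 : fderiv ℝ (fun X => fderiv ℝ ω X (vecMulVec ξ η)) F (vecMulVec ξ η) < 0) :
    ¬ ∃ Ψ : ℝ → ℝ, StrictMonoOn Ψ I ∧ RankOneConvex (fun X => Ψ (ω X)) :=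
  impossibility_lemma_general n I ω hω hmaps F hF ξ η h1 h2
end

section
/- Let Ψ: [0,∞) → ℝ be twice differentiable, monotone increasing and convex, and suppose Ψ''(s) ≥ (1/8)·Ψ'(s) for all s > 1. Then the function t ↦ Ψ((log t)²) is convex on (0,∞). -/
/-!
With `L = log t`, the second derivative of `t ↦ Ψ(L²)` is
`(4 L² Ψ''(L²) + (2 - 2L) Ψ'(L²)) / t²`. Monotonicity gives `Ψ' ≥ 0` and convexity `Ψ'' ≥ 0`,
so the numerator is nonnegative when `L ≤ 1`. When `L > 1` we have `L² > 1`, and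
`Ψ'' ≥ Ψ'/8` bounds the numerator below by `Ψ'(L²) (L - 2)² / 2 ≥ 0`.
-/

open Real Set

lemma HasDerivWithinAt.nonneg_of_monotoneOn_Ici {f : ℝ → ℝ} {f' a x : ℝ} (hx : a ≤ x)
    (hd : HasDerivWithinAt f f' (Ici a) x) (hf : MonotoneOn f (Ici a)) : 0 ≤ f' := by
  have hsub : Ici x ⊆ Ici a := Ici_subset_Ici.mpr hx
  have hacc : AccPt x (Filter.principal (Ici x)) := by
    rw [accPt_principal_iff_nhdsWithin, Ici_sdiff_left]
    infer_instance
  exact (hd.mono hsub).nonneg_of_monotoneOn hacc (hf.mono hsub)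

lemma ConvexOn.monotoneOn_of_hasDerivWithinAt {S : Set ℝ} {f f' : ℝ → ℝ} (hfc : ConvexOn ℝ S f)
    (hf' : ∀ x ∈ S, HasDerivWithinAt f (f' x) S x) : MonotoneOn f' S := by
  intro x hx y hy hxy
  rcases hxy.eq_or_lt with rfl | hlt
  · rfl
  exact (hfc.le_slope_of_hasDerivWithinAt hx hy hlt (hf' x hx)).trans
    (hfc.slope_le_of_hasDerivWithinAt hx hy hlt (hf' y hy))

lemma hasDerivAt_log_sq {t : ℝ} (ht : t ≠ 0) :
    HasDerivAt (fun u => log u ^ 2) (2 * log t / t) t := by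
  refine ((hasDerivAt_log ht).pow 2).congr_deriv ?_
  field_simp
  norm_num

lemma hasDerivAt_two_mul_log_div {t : ℝ} (ht : t ≠ 0) :
    HasDerivAt (fun u => 2 * log u / u) ((2 - 2 * log t) / t ^ 2) t := by
  refine (((hasDerivAt_log ht).const_mul 2).div (hasDerivAt_id' t) ht).congr_deriv ?_
  field_simp

lemma hasDerivWithinAt_comp_log_sq {φ φ' : ℝ → ℝ}
    (hφ : ∀ s ∈ Ici (0 : ℝ), HasDerivWithinAt φ (φ' s) (Ici 0) s) {S : Set ℝ} {t : ℝ}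
    (ht : t ≠ 0) :
    HasDerivWithinAt (fun u => φ (log u ^ 2)) (φ' (log t ^ 2) * (2 * log t / t)) S t :=
  (hφ (log t ^ 2) (mem_Ici.mpr (sq_nonneg _))).comp t (hasDerivAt_log_sq ht).hasDerivWithinAt
    (fun u _ => sq_nonneg (log u))

lemma four_mul_sq_mul_add_two_sub_two_mul_mul_nonneg {L p q : ℝ} (hp : 0 ≤ p) (hq : 0 ≤ q)
    (hpq : 1 < L ^ 2 → 1 / 8 * p ≤ q) : 0 ≤ 4 * L ^ 2 * q + (2 - 2 * L) * p := by
  rcases le_or_gt L 1 with hL | hL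
  · have : 0 ≤ (2 - 2 * L) * p := mul_nonneg (by linarith) hp
    positivity
  · have hq' := hpq (by nlinarith)
    nlinarith [mul_le_mul_of_nonneg_left hq' (sq_nonneg L), mul_nonneg hp (sq_nonneg (L - 2))]

/-- If `Ψ : [0,∞) → ℝ` is twice differentiable, monotone increasing and convex, and
`Ψ''(s) ≥ (1/8) Ψ'(s)` for all `s > 1`, then `t ↦ Ψ((log t)²)` is convex on `(0,∞)`.
Here the derivatives of `Ψ` on `[0,∞)` are encoded by functions `Ψ'` and `Ψ''`. -/
theorem convexification_of_log_sq
    (Ψ Ψ' Ψ'' : ℝ → ℝ)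
    (hd1 : ∀ s ∈ Set.Ici (0 : ℝ), HasDerivWithinAt Ψ (Ψ' s) (Set.Ici 0) s)
    (hd2 : ∀ s ∈ Set.Ici (0 : ℝ), HasDerivWithinAt Ψ' (Ψ'' s) (Set.Ici 0) s)
    (hmono : MonotoneOn Ψ (Set.Ici 0))
    (hconv : ConvexOn ℝ (Set.Ici 0) Ψ)
    (hineq : ∀ s : ℝ, 1 < s → (1 / 8) * Ψ' s ≤ Ψ'' s) :
    ConvexOn ℝ (Set.Ioi (0 : ℝ)) (fun t : ℝ => Ψ ((Real.log t) ^ 2)) := by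
  have hΨ' : ∀ s, 0 ≤ s → 0 ≤ Ψ' s := fun s hs =>
    (hd1 s hs).nonneg_of_monotoneOn_Ici hs hmono
  have hΨ'' : ∀ s, 0 ≤ s → 0 ≤ Ψ'' s := fun s hs =>
    (hd2 s hs).nonneg_of_monotoneOn_Ici hs (hconv.monotoneOn_of_hasDerivWithinAt hd1)
  refine convexOn_of_hasDerivWithinAt2_nonneg (convex_Ioi 0)
    (f' := fun t => Ψ' (log t ^ 2) * (2 * log t / t))
    (f'' := fun t => (4 * log t ^ 2 * Ψ'' (log t ^ 2) + (2 - 2 * log t) * Ψ' (log t ^ 2)) / t ^ 2)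
    (fun t ht => (hasDerivWithinAt_comp_log_sq hd1 (ne_of_gt ht)).continuousWithinAt)
    ?_ ?_ ?_ <;> simp only [interior_Ioi]
  · exact fun t ht => hasDerivWithinAt_comp_log_sq hd1 (ne_of_gt ht)
  · intro t ht
    refine ((hasDerivWithinAt_comp_log_sq hd2 (ne_of_gt ht)).mul
      (hasDerivAt_two_mul_log_div (ne_of_gt ht)).hasDerivWithinAt).congr_deriv ?_
    field_simp
    ring
  · exact fun t _ => div_nonneg (four_mul_sq_mul_add_two_sub_two_mul_mul_nonneg
      (hΨ' _ (sq_nonneg _)) (hΨ'' _ (sq_nonneg _)) (hineq _)) (sq_nonneg t)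
end

section
/- Let n ≥ 2 and let Ψ: [0,∞) → ℝ be continuously differentiable. If the mapping F ↦ Ψ(‖log U‖²) is rank-one convex on GL⁺(n), where U = √(FᵀF), then Ψ is monotone increasing on [0,∞). -/
open Matrix Real

attribute [local instance] Matrix.frobeniusNormedAddCommGroup Matrix.frobeniusNormedSpace

/-!
On positive diagonal matrices `‖log U‖²` is the sum of the squared logarithms of the entries.
Given `0 ≤ a ≤ b` and `c = √(b - a)`, the energy along the rank-one line
`t ↦ diag(1 + t, e^{√a}, 1, …, 1)` is `Ψ (log (1 + t)² + a)`: it equals `Ψ b` at `t = e^{±c} - 1`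
and `Ψ a` at `t = 0` in between. A convex function on a segment is bounded by the larger of its
endpoint values, so `Ψ a ≤ Ψ b`.
-/

open Function Set

lemma Matrix.diagonal_comp_mul_eq_of_diagonal_mul_eq {ι R : Type*} [Fintype ι] [DecidableEq ι]
    [CommRing R] [NoZeroDivisors R] {v μ : ι → R} {U : Matrix ι ι R} (f : R → R)
    (h : diagonal v * U = U * diagonal μ) : diagonal (f ∘ v) * U = U * diagonal (f ∘ μ) := by
  ext i k
  have hik := congrFun (congrFun h i) k
  simp only [diagonal_mul, mul_diagonal, Function.comp_apply] at hik ⊢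
  rcases eq_or_ne (U i k) 0 with h0 | h0
  · simp [h0]
  · rw [mul_comm] at hik
    rw [mul_left_cancel₀ h0 hik, mul_comm]

lemma matFun_diagonal {n : ℕ} (f : ℝ → ℝ) (v : Fin n → ℝ) :
    matFun f (diagonal v) = diagonal (f ∘ v) := by
  have hA := isHermitian_diagonal v
  rw [matFun, dif_pos hA]
  set U : Mat n := (hA.eigenvectorUnitary : Mat n)
  have hspec : diagonal v * U = U * diagonal hA.eigenvalues := by
    conv_lhs => rw [hA.spectral_theorem, Unitary.conjStarAlgAut_apply]
    rw [mul_assoc, Unitary.coe_star_mul_self, mul_one]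
    rfl
  rw [← diagonal_comp_mul_eq_of_diagonal_mul_eq f hspec, mul_assoc,
    Unitary.mul_star_self_of_mem hA.eigenvectorUnitary.2, mul_one]

lemma logU_diagonal {n : ℕ} {w : Fin n → ℝ} (hw : ∀ k, 0 < w k) :
    logU (diagonal w) = diagonal (Real.log ∘ w) := by
  have hsqrt : (Real.sqrt ∘ fun k => w k * w k) = w :=
    funext fun k => Real.sqrt_mul_self (hw k).le
  rw [logU, diagonal_transpose, diagonal_mul_diagonal, matSqrt, matFun_diagonal, hsqrt, matLog,
    matFun_diagonal]

lemma nsq_diagonal {n : ℕ} (w : Fin n → ℝ) : nsq (diagonal w) = ∑ k, w k ^ 2 := by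
  simp [nsq, diagonal_mul_diagonal, sq]

lemma nsq_logU_diagonal {n : ℕ} {w : Fin n → ℝ} (hw : ∀ k, 0 < w k) :
    nsq (logU (diagonal w)) = ∑ k, Real.log (w k) ^ 2 := by
  rw [logU_diagonal hw, nsq_diagonal]
  rfl

lemma diagonal_mem_GLp {n : ℕ} {w : Fin n → ℝ} (hw : ∀ k, 0 < w k) : diagonal w ∈ GLp n := by
  show 0 < (diagonal w).det
  rw [det_diagonal]
  exact Finset.prod_pos fun k _ => hw k

lemma diagonal_add_smul_vecMulVec_single {ι R : Type*} [Fintype ι] [DecidableEq ι] [Semiring R]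
    (d : ι → R) (i : ι) (t : R) :
    diagonal d + t • vecMulVec (Pi.single i 1) (Pi.single i 1) = diagonal (d + Pi.single i t) := by
  rw [← single_eq_single_vecMulVec_single, smul_single, smul_eq_mul, mul_one, ← diagonal_single,
    diagonal_add]
  rfl

lemma add_single_pos {ι : Type*} [DecidableEq ι] {d : ι → ℝ} (hd : ∀ k, 0 < d k) {i : ι} {t : ℝ}
    (ht : -d i < t) (k : ι) : 0 < (d + Pi.single i t : ι → ℝ) k := by
  rcases eq_or_ne k i with rfl | hki
  · simp only [Pi.add_apply, Pi.single_eq_same]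
    linarith
  · simpa [hki] using hd k

lemma RankOneConvex.convexOn_diagonal_add_single {n : ℕ} {W : Mat n → ℝ} (hW : RankOneConvex W)
    {d : Fin n → ℝ} (hd : ∀ k, 0 < d k) (i : Fin n) :
    ConvexOn ℝ (Ioi (-d i)) fun t => W (diagonal (d + Pi.single i t)) := by
  have hline := diagonal_add_smul_vecMulVec_single d i
  have hconv := hW _ (diagonal_mem_GLp hd) _ _ _ (convex_Ioi _) fun t ht => by
    rw [hline]
    exact diagonal_mem_GLp (add_single_pos hd ht)
  exact hconv.congr fun t _ => congrArg W (hline t)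

lemma sum_log_sq_update_exp_add_single {ι : Type*} [Fintype ι] [DecidableEq ι] {i j : ι}
    (hij : i ≠ j) (r t : ℝ) :
    ∑ k, Real.log ((update (1 : ι → ℝ) j (exp r) + Pi.single i t : ι → ℝ) k) ^ 2 =
      Real.log (1 + t) ^ 2 + r ^ 2 := by
  rw [Fintype.sum_eq_add i j hij fun k hk => by simp [hk.1, hk.2]]
  simp [hij, hij.symm]

lemma le_of_convexOn_log_one_add_sq {Ψ : ℝ → ℝ} {a b : ℝ} (hab : a ≤ b)
    (h : ConvexOn ℝ (Ioi (-1)) fun t => Ψ (Real.log (1 + t) ^ 2 + a)) : Ψ a ≤ Ψ b := by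
  set c := √(b - a)
  have hc : 0 ≤ c := Real.sqrt_nonneg _
  have hc2 : c ^ 2 = b - a := Real.sq_sqrt (sub_nonneg.mpr hab)
  have hend : ∀ s : ℝ, Real.log (1 + (exp s - 1)) ^ 2 + a = s ^ 2 + a := by simp
  have key := h.le_max_of_mem_Icc (x := exp (-c) - 1) (y := exp c - 1) (z := 0)
    (by simp [exp_pos]) (by simp [exp_pos])
    ⟨by simpa using exp_le_one_iff.mpr (neg_nonpos.mpr hc), by simpa using one_le_exp hc⟩
  simpa [hend, hc2] using key

theorem monotonicity_from_rank_one_convexity_logU_general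
    (n : ℕ) (hn : 2 ≤ n)
    (Ψ : ℝ → ℝ)
    (hW : RankOneConvex (fun F : Mat n => Ψ (nsq (logU F)))) :
    MonotoneOn Ψ (Set.Ici 0) := by
  intro a ha b _ hab
  let i : Fin n := ⟨0, by omega⟩
  let j : Fin n := ⟨1, hn⟩
  have hij : i ≠ j := by simp [i, j, Fin.ext_iff]
  set d : Fin n → ℝ := update 1 j (exp √a)
  have hd : ∀ k, 0 < d k := fun k => by
    rcases eq_or_ne k j with rfl | hkj <;> simp [d, exp_pos, *]
  have hdi : d i = 1 := by simp [d, hij]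
  have hconv := hW.convexOn_diagonal_add_single hd i
  rw [hdi] at hconv
  refine le_of_convexOn_log_one_add_sq hab (hconv.congr fun t ht => ?_)
  have hpos := add_single_pos hd (hdi ▸ ht)
  simp only [nsq_logU_diagonal hpos, d, sum_log_sq_update_exp_add_single hij, Real.sq_sqrt ha]

/-- **Lemma 3.1.** Let `n ≥ 2` and let `Ψ : [0,∞) → ℝ` be continuously differentiable. If
`F ↦ Ψ(‖log U‖²)` (with `U = √(FᵀF)`) is rank-one convex on `GL⁺(n)`, then `Ψ` is monotone
increasing on `[0,∞)`. -/
theorem monotonicity_from_rank_one_convexity_logU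
    (n : ℕ) (hn : 2 ≤ n)
    (Ψ : ℝ → ℝ) (hΨ : ContDiffOn ℝ 1 Ψ (Set.Ici 0))
    (hW : RankOneConvex (fun F : Mat n => Ψ (nsq (logU F)))) :
    MonotoneOn Ψ (Set.Ici 0) :=
  monotonicity_from_rank_one_convexity_logU_general n hn Ψ hW
end

section
/- Let F = diag(e⁸, e²) ∈ GL⁺(2), ξ = (√2/2)·(1,1)ᵀ ∈ ℝ², and η = √2·(−e⁸, 4e²)ᵀ ∈ ℝ². Define h(t) = ‖log √((F + t·ξ⊗η)ᵀ(F + t·ξ⊗η))‖² for t ∈ (−1/3, 1/3) (on which det(F + t·ξ⊗η) = e¹⁰(3t+1) > 0). Then h is twice differentiable at 0 with h'(0) = 0 and h''(0) = (110 − 2e¹²)/(e¹² − 1) < 0; in particular, the function F ↦ ‖log U‖² has a vanishing first derivative and a negative second derivative at F in the rank-one direction ξ⊗η. -/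
/-!
Along the line `C(t) = F + t ξ ⊗ η` the tensor `Cᵀ C` has trace
`T(t) = e¹⁶(2t² - 2t + 1) + e⁴(32t² + 8t + 1)` and determinant `D(t) = (det C)² = e²⁰(3t + 1)²`,
so its eigenvalues are the roots `μ± = (T ± √(T² - 4D))/2` of `X² - T X + D`, those of `U` are
`√μ±`, and `h = ((log μ₊)² + (log μ₋)²)/4` near `0`. At `t = 0` the roots are `e¹⁶` and `e⁴`;
differentiating `μ² - Tμ + D = 0` implicitly, `(log μ)' = (T'μ - D')/(μ(2μ - T))`, which at `0` is
`-2` resp. `8`, with derivatives `18/(e¹² - 1)` resp. `-18e¹²/(e¹² - 1)`. Hence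
`h'(0) = (16·(-2) + 4·8)/2 = 0` and
`h''(0) = ((-2)² + 8² + 16·18/(e¹² - 1) - 4·18e¹²/(e¹² - 1))/2 = (110 - 2e¹²)/(e¹² - 1)`.
-/

open Matrix Real

attribute [local instance] Matrix.frobeniusNormedAddCommGroup Matrix.frobeniusNormedSpace

open Filter Topology

section SpectralCalculus

variable {n : ℕ} {A : Mat n}

lemma matFun_eq_cfc (hA : A.IsHermitian) (f : ℝ → ℝ) : matFun f A = cfc f A := by
  rw [matFun, dif_pos hA, hA.cfc_eq, IsHermitian.cfc, Unitary.conjStarAlgAut_apply]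
  rfl

lemma matLog_matSqrt_eq_cfc (hA : A.IsHermitian) :
    matLog (matSqrt A) = cfc (fun x => log √x) A := by
  have hS : (cfc Real.sqrt A).IsHermitian := cfc_predicate Real.sqrt A
  rw [matLog, matSqrt, matFun_eq_cfc hA, matFun_eq_cfc hS]
  exact (cfc_comp log Real.sqrt A hA ((A.finite_real_spectrum.image _).continuousOn _)
    (A.finite_real_spectrum.continuousOn _)).symm

lemma nsq_cfc (hA : A.IsHermitian) (f : ℝ → ℝ) :
    nsq (cfc f A) = ∑ i, f (hA.eigenvalues i) ^ 2 := by
  have hS : (cfc f A)ᵀ = cfc f A := by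
    have : (cfc f A).IsHermitian := cfc_predicate f A
    rwa [IsHermitian, conjTranspose_eq_transpose_of_trivial] at this
  rw [nsq, hS, ← cfc_mul f f A (A.finite_real_spectrum.continuousOn _)
    (A.finite_real_spectrum.continuousOn _), hA.cfc_eq, IsHermitian.cfc,
    Unitary.conjStarAlgAut_apply, trace_mul_cycle, Unitary.coe_star_mul_self, one_mul,
    trace_diagonal]
  simp [sq]

lemma sum_eigenvalues_fin_two {A : Mat 2} (hA : A.IsHermitian) (g : ℝ → ℝ) {μ₁ μ₂ : ℝ}
    (hsum : μ₁ + μ₂ = A.trace) (hprod : μ₁ * μ₂ = A.det) :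
    ∑ i, g (hA.eigenvalues i) = g μ₁ + g μ₂ := by
  have htr := hA.trace_eq_sum_eigenvalues
  have hdet := hA.det_eq_prod_eigenvalues
  simp only [Fin.sum_univ_two, Fin.prod_univ_two, RCLike.ofReal_real_eq_id, id] at htr hdet ⊢
  set a := hA.eigenvalues 0
  set b := hA.eigenvalues 1
  have hroot : (a - μ₁) * (a - μ₂) = 0 := by
    linear_combination a * (htr.symm.trans hsum.symm) - hdet.symm.trans hprod.symm
  rcases mul_eq_zero.mp hroot with h | h
  · obtain rfl : a = μ₁ := by linarith
    obtain rfl : b = μ₂ := by linarith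
    rfl
  · obtain rfl : a = μ₂ := by linarith
    obtain rfl : b = μ₁ := by linarith
    ring

lemma nsq_matLog_matSqrt_fin_two {A : Mat 2} (hA : A.IsHermitian) {μ₁ μ₂ : ℝ}
    (h₁ : 0 < μ₁) (h₂ : 0 < μ₂) (hsum : μ₁ + μ₂ = A.trace) (hprod : μ₁ * μ₂ = A.det) :
    nsq (matLog (matSqrt A)) = (log μ₁ ^ 2 + log μ₂ ^ 2) / 4 := by
  rw [matLog_matSqrt_eq_cfc hA, nsq_cfc hA,
    sum_eigenvalues_fin_two hA (fun x => log √x ^ 2) hsum hprod, log_sqrt h₁.le, log_sqrt h₂.le]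
  ring

end SpectralCalculus

section QuadraticRoot

variable {T D : ℝ → ℝ} {T₁ D₁ ε t : ℝ}

/-- For `ε = 1` (resp. `ε = -1`) the larger (resp. smaller) root of `X² - T t X + D t`. -/
noncomputable def quadRoot (T D : ℝ → ℝ) (ε t : ℝ) : ℝ := (T t + ε * √(T t ^ 2 - 4 * D t)) / 2

lemma quadRoot_add_quadRoot_neg_one : quadRoot T D 1 t + quadRoot T D (-1) t = T t := by
  simp only [quadRoot]
  ring

lemma quadRoot_mul_quadRoot_neg_one (hΔ : 0 ≤ T t ^ 2 - 4 * D t) :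
    quadRoot T D 1 t * quadRoot T D (-1) t = D t := by
  simp only [quadRoot]
  linear_combination (-1 / 4 : ℝ) * Real.sq_sqrt hΔ

lemma two_mul_quadRoot_sub : 2 * quadRoot T D ε t - T t = ε * √(T t ^ 2 - 4 * D t) := by
  simp only [quadRoot]
  ring

lemma two_mul_quadRoot_sub_ne_zero (hΔ : 0 < T t ^ 2 - 4 * D t) (hε : ε = 1 ∨ ε = -1) :
    2 * quadRoot T D ε t - T t ≠ 0 := by
  rw [two_mul_quadRoot_sub]
  exact mul_ne_zero (by rcases hε with rfl | rfl <;> norm_num) (sqrt_pos.mpr hΔ).ne'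

lemma hasDerivAt_quadRoot (hT : HasDerivAt T T₁ t) (hD : HasDerivAt D D₁ t)
    (hΔ : 0 < T t ^ 2 - 4 * D t) (hε : ε = 1 ∨ ε = -1) :
    HasDerivAt (quadRoot T D ε)
      ((T₁ * quadRoot T D ε t - D₁) / (2 * quadRoot T D ε t - T t)) t := by
  have hdisc : HasDerivAt (fun s => T s ^ 2 - 4 * D s) (2 * T t * T₁ - 4 * D₁) t := by
    refine ((hT.fun_pow 2).fun_sub (hD.const_mul 4)).congr_deriv ?_
    norm_num
  refine ((hT.add ((hdisc.sqrt hΔ.ne').const_mul ε)).div_const 2).congr_deriv ?_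
  rw [two_mul_quadRoot_sub]
  simp only [quadRoot]
  set S := √(T t ^ 2 - 4 * D t)
  have hS : S ≠ 0 := (sqrt_pos.mpr hΔ).ne'
  rcases hε with rfl | rfl <;> field_simp <;> ring

lemma hasDerivAt_log_quadRoot (hT : HasDerivAt T T₁ t) (hD : HasDerivAt D D₁ t)
    (hΔ : 0 < T t ^ 2 - 4 * D t) (hε : ε = 1 ∨ ε = -1) (hpos : 0 < quadRoot T D ε t) :
    HasDerivAt (fun s => log (quadRoot T D ε s))
      ((T₁ * quadRoot T D ε t - D₁) / (quadRoot T D ε t * (2 * quadRoot T D ε t - T t))) t := by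
  convert (hasDerivAt_quadRoot hT hD hΔ hε).log hpos.ne' using 1
  rw [div_div, mul_comm (2 * _ - _)]

end QuadraticRoot

lemma hasDerivAt_and_hasDerivAt_deriv_of_eventuallyEq {f g g' : ℝ → ℝ} {x c : ℝ}
    (hfg : f =ᶠ[𝓝 x] g) (hg : ∀ᶠ t in 𝓝 x, HasDerivAt g (g' t) t) (hg' : HasDerivAt g' c x) :
    HasDerivAt f (g' x) x ∧ HasDerivAt (deriv f) c x :=
  ⟨hg.self_of_nhds.congr_of_eventuallyEq hfg,
    hg'.congr_of_eventuallyEq (hfg.deriv.trans (hg.mono fun _ ht => ht.deriv))⟩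

noncomputable section PlanarExample

lemma exp_sixteen : exp 16 = exp 4 ^ 4 := by rw [← exp_nat_mul]; norm_num

lemma exp_twenty : exp 20 = exp 4 ^ 5 := by rw [← exp_nat_mul]; norm_num

lemma exp_twelve : exp 12 = exp 4 ^ 3 := by rw [← exp_nat_mul]; norm_num

lemma exp_twelve_sub_one_pos : 0 < exp 12 - 1 := sub_pos.mpr (one_lt_exp_iff.mpr (by norm_num))

lemma exp_four_lt_exp_sixteen : exp 4 < exp 16 := exp_lt_exp.mpr (by norm_num)

def rankOneLine (t : ℝ) : Mat 2 :=
  !![exp 8 * (1 - t), 4 * exp 2 * t; -(exp 8 * t), exp 2 * (1 + 4 * t)]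

def cauchyGreenTrace (t : ℝ) : ℝ :=
  exp 16 * (2 * t ^ 2 - 2 * t + 1) + exp 4 * (32 * t ^ 2 + 8 * t + 1)

def cauchyGreenDet (t : ℝ) : ℝ := exp 20 * (3 * t + 1) ^ 2

def cauchyGreenTraceDeriv (t : ℝ) : ℝ := exp 16 * (4 * t - 2) + exp 4 * (64 * t + 8)

def cauchyGreenDetDeriv (t : ℝ) : ℝ := 6 * exp 20 * (3 * t + 1)

lemma diag_add_smul_vecMulVec (t : ℝ) :
    !![exp 8, 0; 0, exp 2] + t • vecMulVec ![√2 / 2, √2 / 2] ![-(√2 * exp 8), √2 * (4 * exp 2)]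
      = rankOneLine t := by
  have hs : √2 * √2 = 2 := mul_self_sqrt zero_le_two
  ext i j
  fin_cases i <;> fin_cases j <;>
    simp only [rankOneLine, Matrix.add_apply, Matrix.smul_apply, vecMulVec_apply, of_apply,
      smul_eq_mul, cons_val', cons_val_zero, cons_val_one, cons_val_fin_one, Fin.zero_eta,
      Fin.mk_one]
  · linear_combination (-(t * exp 8) / 2) * hs
  · linear_combination (2 * t * exp 2) * hs
  · linear_combination (-(t * exp 8) / 2) * hs
  · linear_combination (2 * t * exp 2) * hs

lemma det_rankOneLine (t : ℝ) : (rankOneLine t).det = exp 10 * (3 * t + 1) := by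
  have h10 : exp 8 * exp 2 = exp 10 := by rw [← exp_add]; norm_num
  rw [rankOneLine, det_fin_two_of]
  linear_combination (1 + 3 * t) * h10

lemma trace_transpose_mul_rankOneLine (t : ℝ) :
    ((rankOneLine t)ᵀ * rankOneLine t).trace = cauchyGreenTrace t := by
  have h16 : exp 8 * exp 8 = exp 16 := by rw [← exp_add]; norm_num
  have h4 : exp 2 * exp 2 = exp 4 := by rw [← exp_add]; norm_num
  simp only [rankOneLine, cauchyGreenTrace, trace_fin_two, mul_apply, transpose_apply, of_apply,
    cons_val', cons_val_zero, cons_val_one, cons_val_fin_one, Fin.sum_univ_two]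
  linear_combination (2 * t ^ 2 - 2 * t + 1) * h16 + (32 * t ^ 2 + 8 * t + 1) * h4

lemma det_transpose_mul_rankOneLine (t : ℝ) :
    ((rankOneLine t)ᵀ * rankOneLine t).det = cauchyGreenDet t := by
  have h20 : exp 10 * exp 10 = exp 20 := by rw [← exp_add]; norm_num
  rw [det_mul, det_transpose, det_rankOneLine, cauchyGreenDet]
  linear_combination (3 * t + 1) ^ 2 * h20

lemma hasDerivAt_cauchyGreenTrace (t : ℝ) :
    HasDerivAt cauchyGreenTrace (cauchyGreenTraceDeriv t) t := by
  have hsq : HasDerivAt (fun s : ℝ => s ^ 2) (2 * t) t := by simpa using hasDerivAt_pow 2 t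
  have hid := hasDerivAt_id t
  refine ((((hsq.const_mul 2).sub (hid.const_mul 2)).add_const 1).const_mul (exp 16) |>.add
    ((((hsq.const_mul 32).add (hid.const_mul 8)).add_const 1).const_mul (exp 4))).congr_deriv ?_
  simp only [cauchyGreenTraceDeriv]
  ring

lemma hasDerivAt_cauchyGreenDet (t : ℝ) : HasDerivAt cauchyGreenDet (cauchyGreenDetDeriv t) t := by
  refine (((((hasDerivAt_id t).const_mul 3).add_const 1).fun_pow 2).const_mul
    (exp 20)).congr_deriv ?_
  simp only [cauchyGreenDetDeriv, id]
  ring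

lemma hasDerivAt_cauchyGreenTraceDeriv (t : ℝ) :
    HasDerivAt cauchyGreenTraceDeriv (4 * exp 16 + 64 * exp 4) t := by
  have hid := hasDerivAt_id t
  refine ((((hid.const_mul 4).sub_const 2).const_mul (exp 16)).add
    (((hid.const_mul 64).add_const 8).const_mul (exp 4))).congr_deriv ?_
  ring

lemma hasDerivAt_cauchyGreenDetDeriv (t : ℝ) :
    HasDerivAt cauchyGreenDetDeriv (18 * exp 20) t := by
  refine ((((hasDerivAt_id t).const_mul 3).add_const 1).const_mul (6 * exp 20)).congr_deriv ?_
  ring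

local notation "μ" => quadRoot cauchyGreenTrace cauchyGreenDet

lemma cauchyGreenDisc_zero :
    cauchyGreenTrace 0 ^ 2 - 4 * cauchyGreenDet 0 = (exp 16 - exp 4) ^ 2 := by
  simp only [cauchyGreenTrace, cauchyGreenDet, exp_sixteen, exp_twenty]
  ring

lemma cauchyGreenDisc_zero_pos : 0 < cauchyGreenTrace 0 ^ 2 - 4 * cauchyGreenDet 0 := by
  rw [cauchyGreenDisc_zero]
  exact pow_pos (sub_pos.mpr exp_four_lt_exp_sixteen) 2

lemma sqrt_cauchyGreenDisc_zero :
    √(cauchyGreenTrace 0 ^ 2 - 4 * cauchyGreenDet 0) = exp 16 - exp 4 := by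
  rw [cauchyGreenDisc_zero, sqrt_sq (sub_nonneg.mpr exp_four_lt_exp_sixteen.le)]

lemma eig_one_zero : μ 1 0 = exp 16 := by
  rw [quadRoot, sqrt_cauchyGreenDisc_zero, cauchyGreenTrace]
  ring

lemma eig_neg_one_zero : μ (-1) 0 = exp 4 := by
  rw [quadRoot, sqrt_cauchyGreenDisc_zero, cauchyGreenTrace]
  ring

lemma hasDerivAt_eig_zero {ε : ℝ} (hε : ε = 1 ∨ ε = -1) :
    HasDerivAt (μ ε) ((cauchyGreenTraceDeriv 0 * μ ε 0 - cauchyGreenDetDeriv 0) /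
      (2 * μ ε 0 - cauchyGreenTrace 0)) 0 :=
  hasDerivAt_quadRoot (hasDerivAt_cauchyGreenTrace 0) (hasDerivAt_cauchyGreenDet 0)
    cauchyGreenDisc_zero_pos hε

lemma hasDerivAt_eig_one_zero : HasDerivAt (μ 1) (-2 * exp 16) 0 := by
  refine (hasDerivAt_eig_zero (Or.inl rfl)).congr_deriv ?_
  rw [div_eq_iff (two_mul_quadRoot_sub_ne_zero cauchyGreenDisc_zero_pos (Or.inl rfl)),
    eig_one_zero]
  simp only [cauchyGreenTraceDeriv, cauchyGreenDetDeriv, cauchyGreenTrace, exp_sixteen,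
    exp_twenty]
  ring

lemma hasDerivAt_eig_neg_one_zero : HasDerivAt (μ (-1)) (8 * exp 4) 0 := by
  refine (hasDerivAt_eig_zero (Or.inr rfl)).congr_deriv ?_
  rw [div_eq_iff (two_mul_quadRoot_sub_ne_zero cauchyGreenDisc_zero_pos (Or.inr rfl)),
    eig_neg_one_zero]
  simp only [cauchyGreenTraceDeriv, cauchyGreenDetDeriv, cauchyGreenTrace, exp_sixteen,
    exp_twenty]
  ring

lemma eventually_disc_pos_and_eig_pos : ∀ᶠ t in 𝓝 0,
    0 < cauchyGreenTrace t ^ 2 - 4 * cauchyGreenDet t ∧ 0 < μ 1 t ∧ 0 < μ (-1) t := by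
  have hdisc : ContinuousAt (fun t => cauchyGreenTrace t ^ 2 - 4 * cauchyGreenDet t) 0 := by
    unfold cauchyGreenTrace cauchyGreenDet
    fun_prop
  refine (hdisc.eventually_const_lt cauchyGreenDisc_zero_pos).and
    ((hasDerivAt_eig_one_zero.continuousAt.eventually_const_lt ?_).and
      (hasDerivAt_eig_neg_one_zero.continuousAt.eventually_const_lt ?_))
  · exact eig_one_zero ▸ exp_pos 16
  · exact eig_neg_one_zero ▸ exp_pos 4

/-- `(log μ_ε)'`, from differentiating `μ² - T μ + D = 0` implicitly. -/
def logEigDeriv (ε t : ℝ) : ℝ :=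
  (cauchyGreenTraceDeriv t * μ ε t - cauchyGreenDetDeriv t) /
    (μ ε t * (2 * μ ε t - cauchyGreenTrace t))

lemma logEigDeriv_eq (ε t : ℝ) : logEigDeriv ε t =
    (cauchyGreenTraceDeriv t * μ ε t - cauchyGreenDetDeriv t) /
      (2 * μ ε t - cauchyGreenTrace t) / μ ε t := by
  rw [logEigDeriv, div_div, mul_comm (μ ε t)]

lemma logEigDeriv_one_zero : logEigDeriv 1 0 = -2 := by
  rw [logEigDeriv_eq, (hasDerivAt_eig_zero (Or.inl rfl)).unique hasDerivAt_eig_one_zero,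
    eig_one_zero]
  field_simp

lemma logEigDeriv_neg_one_zero : logEigDeriv (-1) 0 = 8 := by
  rw [logEigDeriv_eq, (hasDerivAt_eig_zero (Or.inr rfl)).unique hasDerivAt_eig_neg_one_zero,
    eig_neg_one_zero]
  field_simp

lemma hasDerivAt_log_eig {ε t : ℝ} (hε : ε = 1 ∨ ε = -1)
    (hdisc : 0 < cauchyGreenTrace t ^ 2 - 4 * cauchyGreenDet t) (hμ : 0 < μ ε t) :
    HasDerivAt (fun s => log (μ ε s)) (logEigDeriv ε t) t :=
  hasDerivAt_log_quadRoot (hasDerivAt_cauchyGreenTrace t) (hasDerivAt_cauchyGreenDet t) hdisc hε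
    hμ

lemma hasDerivAt_logEigDeriv_one : HasDerivAt (logEigDeriv 1) (18 / (exp 12 - 1)) 0 := by
  have hμ := hasDerivAt_eig_one_zero
  have hden : μ 1 0 * (2 * μ 1 0 - cauchyGreenTrace 0) ≠ 0 :=
    mul_ne_zero (eig_one_zero ▸ (exp_pos 16).ne')
      (two_mul_quadRoot_sub_ne_zero cauchyGreenDisc_zero_pos (Or.inl rfl))
  refine ((((hasDerivAt_cauchyGreenTraceDeriv 0).mul hμ).sub
    (hasDerivAt_cauchyGreenDetDeriv 0)).div
      (hμ.mul ((hμ.const_mul 2).sub (hasDerivAt_cauchyGreenTrace 0))) hden).congr_deriv ?_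
  simp only [Pi.mul_apply, Pi.sub_apply]
  rw [div_eq_div_iff (pow_ne_zero 2 hden) exp_twelve_sub_one_pos.ne']
  simp only [eig_one_zero, cauchyGreenTraceDeriv, cauchyGreenDetDeriv, cauchyGreenTrace,
    exp_sixteen, exp_twenty, exp_twelve]
  ring

lemma hasDerivAt_logEigDeriv_neg_one :
    HasDerivAt (logEigDeriv (-1)) (-(18 * exp 12) / (exp 12 - 1)) 0 := by
  have hμ := hasDerivAt_eig_neg_one_zero
  have hden : μ (-1) 0 * (2 * μ (-1) 0 - cauchyGreenTrace 0) ≠ 0 :=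
    mul_ne_zero (eig_neg_one_zero ▸ (exp_pos 4).ne')
      (two_mul_quadRoot_sub_ne_zero cauchyGreenDisc_zero_pos (Or.inr rfl))
  refine ((((hasDerivAt_cauchyGreenTraceDeriv 0).mul hμ).sub
    (hasDerivAt_cauchyGreenDetDeriv 0)).div
      (hμ.mul ((hμ.const_mul 2).sub (hasDerivAt_cauchyGreenTrace 0))) hden).congr_deriv ?_
  simp only [Pi.mul_apply, Pi.sub_apply]
  rw [div_eq_div_iff (pow_ne_zero 2 hden) exp_twelve_sub_one_pos.ne']
  simp only [eig_neg_one_zero, cauchyGreenTraceDeriv, cauchyGreenDetDeriv, cauchyGreenTrace,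
    exp_sixteen, exp_twenty, exp_twelve]
  ring

def henckyEnergy (t : ℝ) : ℝ := (log (μ 1 t) ^ 2 + log (μ (-1) t) ^ 2) / 4

def henckyEnergyDeriv (t : ℝ) : ℝ :=
  (log (μ 1 t) * logEigDeriv 1 t + log (μ (-1) t) * logEigDeriv (-1) t) / 2

lemma eventuallyEq_henckyEnergy :
    (fun t => nsq (matLog (matSqrt ((rankOneLine t)ᵀ * rankOneLine t)))) =ᶠ[𝓝 0]
      henckyEnergy := by
  filter_upwards [eventually_disc_pos_and_eig_pos] with t ⟨hdisc, hμ₁, hμ₂⟩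
  refine nsq_matLog_matSqrt_fin_two ?_ hμ₁ hμ₂ ?_ ?_
  · simpa using isHermitian_conjTranspose_mul_self (rankOneLine t)
  · rw [trace_transpose_mul_rankOneLine, quadRoot_add_quadRoot_neg_one]
  · rw [det_transpose_mul_rankOneLine, quadRoot_mul_quadRoot_neg_one hdisc.le]

lemma eventually_hasDerivAt_henckyEnergy :
    ∀ᶠ t in 𝓝 0, HasDerivAt henckyEnergy (henckyEnergyDeriv t) t := by
  filter_upwards [eventually_disc_pos_and_eig_pos] with t ⟨hdisc, hμ₁, hμ₂⟩
  refine ((((hasDerivAt_log_eig (Or.inl rfl) hdisc hμ₁).fun_pow 2).add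
    ((hasDerivAt_log_eig (Or.inr rfl) hdisc hμ₂).fun_pow 2)).div_const 4).congr_deriv ?_
  simp only [henckyEnergyDeriv]
  ring

lemma henckyEnergyDeriv_zero : henckyEnergyDeriv 0 = 0 := by
  rw [henckyEnergyDeriv, eig_one_zero, eig_neg_one_zero, logEigDeriv_one_zero,
    logEigDeriv_neg_one_zero, log_exp, log_exp]
  norm_num

lemma hasDerivAt_henckyEnergyDeriv :
    HasDerivAt henckyEnergyDeriv ((110 - 2 * exp 12) / (exp 12 - 1)) 0 := by
  have hlog₁ := hasDerivAt_log_eig (Or.inl rfl) cauchyGreenDisc_zero_pos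
    (eig_one_zero ▸ exp_pos 16)
  have hlog₂ := hasDerivAt_log_eig (Or.inr rfl) cauchyGreenDisc_zero_pos
    (eig_neg_one_zero ▸ exp_pos 4)
  refine (((hlog₁.mul hasDerivAt_logEigDeriv_one).add
    (hlog₂.mul hasDerivAt_logEigDeriv_neg_one)).div_const 2).congr_deriv ?_
  rw [eig_one_zero, eig_neg_one_zero, logEigDeriv_one_zero, logEigDeriv_neg_one_zero, log_exp,
    log_exp]
  field_simp [exp_twelve_sub_one_pos.ne']
  ring

end PlanarExample

/-- The explicit planar counterexample: for `F = diag(e⁸, e²)`, `ξ = (√2/2)(1,1)ᵀ` and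
`η = √2(−e⁸, 4e²)ᵀ`, the function `h(t) = ‖log √((F + tξ⊗η)ᵀ(F + tξ⊗η))‖²` (defined on
`(−1/3, 1/3)`, where `det(F + tξ⊗η) = e¹⁰(3t+1) > 0`) is twice differentiable at `0` with
`h'(0) = 0` and `h''(0) = (110 − 2e¹²)/(e¹² − 1) < 0`. -/
theorem planar_concave_critical_point
    (F : Mat 2) (hF : F = !![Real.exp 8, 0; 0, Real.exp 2])
    (ξ η : Fin 2 → ℝ)
    (hξ : ξ = ![Real.sqrt 2 / 2, Real.sqrt 2 / 2])
    (hη : η = ![-(Real.sqrt 2 * Real.exp 8), Real.sqrt 2 * (4 * Real.exp 2)])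
    (h : ℝ → ℝ)
    (hh : ∀ t : ℝ, h t = nsq (matLog (matSqrt
      ((F + t • vecMulVec ξ η)ᵀ * (F + t • vecMulVec ξ η))))) :
    (∀ t : ℝ, t ∈ Set.Ioo (-(1 / 3) : ℝ) (1 / 3) →
      (F + t • vecMulVec ξ η).det = Real.exp 10 * (3 * t + 1) ∧
      0 < (F + t • vecMulVec ξ η).det) ∧
    DifferentiableAt ℝ h 0 ∧
    DifferentiableAt ℝ (deriv h) 0 ∧
    deriv h 0 = 0 ∧
    deriv (deriv h) 0 = (110 - 2 * Real.exp 12) / (Real.exp 12 - 1) ∧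
    (110 - 2 * Real.exp 12) / (Real.exp 12 - 1) < 0 := by
  subst hF hξ hη
  have hline : h = fun t => nsq (matLog (matSqrt ((rankOneLine t)ᵀ * rankOneLine t))) :=
    funext fun t => by rw [hh, diag_add_smul_vecMulVec]
  obtain ⟨hd₁, hd₂⟩ := hasDerivAt_and_hasDerivAt_deriv_of_eventuallyEq
    (hline ▸ eventuallyEq_henckyEnergy) eventually_hasDerivAt_henckyEnergy
    hasDerivAt_henckyEnergyDeriv
  refine ⟨fun t ht => ?_, hd₁.differentiableAt, hd₂.differentiableAt,
    hd₁.deriv.trans henckyEnergyDeriv_zero, hd₂.deriv, ?_⟩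
  · rw [diag_add_smul_vecMulVec, det_rankOneLine]
    exact ⟨rfl, mul_pos (exp_pos 10) (by linarith [ht.1])⟩
  · have h85 : 85 ≤ exp 12 := by linarith [quadratic_le_exp_of_nonneg (x := 12) (by norm_num)]
    exact div_neg_of_neg_of_pos (by linarith) exp_twelve_sub_one_pos
end
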